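/- arXiv:1603.05084 — 3 statements merged into one kernel-verified Lean document; each statement's English description precedes it below -/
import Mathlib

section
/- Let n ≥ 1, g, r ≥ 1, and d be integers, and set g̃ := n(g−1) + 1. Suppose that for each i ∈ {1,…,n} there exist functions a_i, b_i : {0,…,r} → ℤ satisfying: (i) ∑_{j=0}^{r} max(b_i(j) − j + (g−1) − d + r, 0) ≤ g−1, and (ii) a_i(j) + b_i(r−j) ≥ d for all j. If moreover ∑_{i=1}^{n} ∑_{j=0}^{r} (a_i(j) − j) ≤ (r+1)(d−r), then ρ(g̃, r, d) ≥ −r. -/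
/-- The Brill-Noether number ρ(g, r, d) = g − (r+1)(g−d+r). -/
def brillNoether (g r d : ℤ) : ℤ := g - (r + 1) * (g - d + r)

/-- The combinatorial heart of the proof of Theorem 1.1: if for each i ∈ {1,…,n}
there are vanishing sequences a_i, b_i : {0,…,r} → ℤ with
(i) ∑_j max(b_i(j) − j + (g−1) − d + r, 0) ≤ g−1 and (ii) a_i(j) + b_i(r−j) ≥ d,
and if ∑_i ∑_j (a_i(j) − j) ≤ (r+1)(d−r), then ρ(g̃, r, d) ≥ −r for
g̃ = n(g−1)+1. -/
theorem brillNoether_ge_of_limit_series (n r : ℕ) (hn : n ≥ 1) (hr : r ≥ 1)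
    (g d : ℤ) (gtilde : ℤ) (hgt : gtilde = (n : ℤ) * (g - 1) + 1)
    (a b : Fin n → Fin (r + 1) → ℤ)
    (hEH : ∀ i : Fin n,
      ∑ j : Fin (r + 1), max (b i j - (j : ℤ) + (g - 1) - d + (r : ℤ)) 0 ≤ g - 1)
    (hcompat : ∀ (i : Fin n) (j : Fin (r + 1)), a i j + b i j.rev ≥ d)
    (hpluecker : ∑ i : Fin n, ∑ j : Fin (r + 1), (a i j - (j : ℤ)) ≤
      ((r : ℤ) + 1) * (d - (r : ℤ))) :
    brillNoether gtilde (r : ℤ) d ≥ -(r : ℤ) := by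
  -- S = ∑ j, with 2S = r(r+1)
  set S : ℤ := ∑ j : Fin (r + 1), (j : ℤ) with hS
  have hS2 : 2 * S = (r : ℤ) * ((r : ℤ) + 1) := by
    have h0 : S = ((∑ j ∈ Finset.range (r + 1), j : ℕ) : ℤ) := by
      rw [hS, Fin.sum_univ_eq_sum_range]
      push_cast
      rfl
    have hnat : (∑ j ∈ Finset.range (r + 1), j) * 2 = (r + 1) * r :=
      Finset.sum_range_id_mul_two (r + 1)
    have hcast : ((∑ j ∈ Finset.range (r + 1), j : ℕ) : ℤ) * 2
        = ((r : ℤ) + 1) * (r : ℤ) := by exact_mod_cast congrArg (Nat.cast : ℕ → ℤ) hnat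
    rw [h0]; linarith
  -- per-i lower bound: r(g-1) ≤ ∑_j (a i j - j)
  have key : ∀ i : Fin n, (r : ℤ) * (g - 1) ≤ ∑ j : Fin (r + 1), (a i j - (j : ℤ)) := by
    intro i
    have h1 : ∑ j : Fin (r + 1), (b i j - (j : ℤ) + (g - 1) - d + (r : ℤ)) ≤ g - 1 :=
      le_trans (Finset.sum_le_sum fun j _ => le_max_left _ _) (hEH i)
    have hb : (∑ j : Fin (r + 1), b i j) - S + ((r : ℤ) + 1) * ((g - 1) - d + r) ≤ g - 1 := by
      have := h1
      simp only [Finset.sum_add_distrib, Finset.sum_sub_distrib, Finset.sum_const,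
        Finset.card_univ, Fintype.card_fin, nsmul_eq_mul] at this
      push_cast at this ⊢
      linarith [this]
    have h2 : ((r : ℤ) + 1) * d ≤ (∑ j : Fin (r + 1), a i j) + ∑ j : Fin (r + 1), b i j := by
      have hrev : ∑ j : Fin (r + 1), b i j.rev = ∑ j : Fin (r + 1), b i j :=
        Fintype.sum_bijective Fin.rev Fin.rev_bijective _ _ (fun _ => rfl)
      calc ((r : ℤ) + 1) * d = ∑ _j : Fin (r + 1), d := by
            simp [Finset.sum_const, Finset.card_univ, mul_comm]
        _ ≤ ∑ j : Fin (r + 1), (a i j + b i j.rev) :=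
            Finset.sum_le_sum fun j _ => hcompat i j
        _ = (∑ j : Fin (r + 1), a i j) + ∑ j : Fin (r + 1), b i j := by
            rw [Finset.sum_add_distrib, hrev]
    have hsplit : ∑ j : Fin (r + 1), (a i j - (j : ℤ))
        = (∑ j : Fin (r + 1), a i j) - S := by
      rw [Finset.sum_sub_distrib]
    rw [hsplit]
    linarith
  -- sum over i
  have hsum : (n : ℤ) * ((r : ℤ) * (g - 1)) ≤
      ∑ i : Fin n, ∑ j : Fin (r + 1), (a i j - (j : ℤ)) := by
    calc (n : ℤ) * ((r : ℤ) * (g - 1))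
        = ∑ _i : Fin n, (r : ℤ) * (g - 1) := by
          simp [Finset.sum_const, Finset.card_univ]
      _ ≤ _ := Finset.sum_le_sum fun i _ => key i
  have hfinal : (n : ℤ) * ((r : ℤ) * (g - 1)) ≤ ((r : ℤ) + 1) * (d - (r : ℤ)) :=
    le_trans hsum hpluecker
  have : brillNoether gtilde (r : ℤ) d + (r : ℤ)
      = ((r : ℤ) + 1) * (d - (r : ℤ)) - (n : ℤ) * ((r : ℤ) * (g - 1)) := by
    subst hgt; unfold brillNoether; ring
  linarith
end

section
/- Let c ∈ ℂ, let a_0 < a_1 < ⋯ < a_r be natural numbers, and let f_0, …, f_r ∈ ℂ[X] be polynomials such that (X − c)^{a_j} divides f_j for each j. Then (X − c)^{N} divides the Wronskian of f_0, …, f_r, where N = ∑_{j=0}^{r} (a_j − j). -/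
open Polynomial

/-- The Wronskian of f_0, …, f_r: determinant of the matrix whose (i,j) entry is
the i-th formal derivative of f_j. -/
noncomputable def wronskian {r : ℕ} (f : Fin (r + 1) → Polynomial ℂ) : Polynomial ℂ :=
  Matrix.det (fun i j : Fin (r + 1) => derivative^[(i : ℕ)] (f j))

theorem Fin.val_le_of_strictMono {n : ℕ} {a : Fin n → ℕ} (ha : StrictMono a) (j : Fin n) :
    (j : ℕ) ≤ a j := by
  obtain ⟨k, hk⟩ := j
  induction k with
  | zero => exact Nat.zero_le _
  | succ k ih => exact (ih (by omega)).trans_lt (ha (Fin.mk_lt_mk.2 k.lt_succ_self))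

theorem Finset.sum_tsub_le_sum_tsub_comp_perm {ι : Type*} [Fintype ι] (a g : ι → ℕ)
    (hga : ∀ i, g i ≤ a i) (σ : Equiv.Perm ι) :
    ∑ i, (a i - g i) ≤ ∑ i, (a i - g (σ i)) :=
  calc ∑ i, (a i - g i) = ∑ i, a i - ∑ i, g (σ i) := by
        rw [Finset.sum_tsub_distrib _ fun i _ => hga i, Equiv.sum_comp σ g]
    _ ≤ ∑ i, (a i - g (σ i)) := by
        rw [tsub_le_iff_right, ← Finset.sum_add_distrib]
        exact Finset.sum_le_sum fun i _ => le_tsub_add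

/-- The Leibniz term `∏ j, M (σ j) j` is divisible by `p ^ ∑ j, (a j - σ j)`, and these truncated
exponents sum to at least `∑ j, a j - ∑ j, j` because `j ≤ a j`. -/
theorem Matrix.pow_sum_tsub_dvd_det {R : Type*} [CommRing R] {n : ℕ}
    (M : Matrix (Fin n) (Fin n) R) (p : R) (a : Fin n → ℕ) (ha : ∀ j : Fin n, (j : ℕ) ≤ a j)
    (hM : ∀ i j : Fin n, p ^ (a j - (i : ℕ)) ∣ M i j) :
    p ^ ∑ j, (a j - (j : ℕ)) ∣ M.det := by
  rw [Matrix.det_apply]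
  refine Finset.dvd_sum fun σ _ => dvd_smul_of_dvd _ ?_
  calc p ^ ∑ j, (a j - (j : ℕ))
      ∣ p ^ ∑ j, (a j - (σ j : ℕ)) :=
        pow_dvd_pow p (Finset.sum_tsub_le_sum_tsub_comp_perm a (fun j => j) ha σ)
    _ = ∏ j, p ^ (a j - (σ j : ℕ)) := (Finset.prod_pow_eq_pow_sum _ _ _).symm
    _ ∣ ∏ j, M (σ j) j := Finset.prod_dvd_prod_of_dvd _ _ fun j _ => hM (σ j) j

/-- If a_0 < a_1 < ⋯ < a_r are naturals and (X − c)^{a_j} divides f_j for each j,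
then (X − c)^N divides the Wronskian of f_0, …, f_r, where N = ∑_j (a_j − j). -/
theorem pow_sub_dvd_wronskian (r : ℕ) (c : ℂ) (a : Fin (r + 1) → ℕ)
    (ha : StrictMono a) (f : Fin (r + 1) → Polynomial ℂ)
    (hdvd : ∀ j : Fin (r + 1), (X - C c) ^ (a j) ∣ f j) :
    (X - C c) ^ (∑ j : Fin (r + 1), (a j - (j : ℕ))) ∣ wronskian f :=
  Matrix.pow_sum_tsub_dvd_det _ _ a (Fin.val_le_of_strictMono ha)
    fun i j => pow_sub_dvd_iterate_derivative_of_pow_dvd i (hdvd j)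
end

section
/- Let V be a ℂ-linear subspace of ℂ[X] of finite dimension r+1 such that every element of V has degree at most d. For x ∈ ℂ, let a_0(x) < a_1(x) < ⋯ < a_r(x) be the r+1 distinct orders of vanishing at x of nonzero elements of V, and define the weight w(x) := ∑_{j=0}^{r} (a_j(x) − j). Then w(x) ≥ 0 for every x, w(x) = 0 for all but finitely many x ∈ ℂ, and ∑_{x ∈ ℂ} w(x) ≤ (r+1)d − r(r+1)/2. -/
/-!
Let `W` be the Wronskian of a basis of `V`. At a point `x`, the Wronskian of a basis of `V`
adapted to `x` (orders of vanishing `a₀ < ⋯ < a_r`) differs from `W` by a nonzero constant, and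
it vanishes at `x` to order exactly `∑ (aⱼ - j)`: after multiplying row `i` by `(X - x)ⁱ`, column
`j` becomes divisible by `(X - x)^aⱼ`, and the matrix of lowest coefficients is
`(aⱼ(aⱼ - 1)⋯(aⱼ - i + 1))ᵢⱼ` times a diagonal matrix, a nonsingular Vandermonde matrix in
disguise. Hence `w(x) = ord_x W`, and `∑ₓ w(x) ≤ deg W ≤ (r + 1)d - r(r + 1)/2`.
-/

open Polynomial

namespace Polynomial

section CommRing

variable {R : Type*} [CommRing R] {n : ℕ}

noncomputable def wronskianMatrix (f : Fin n → R[X]) : Matrix (Fin n) (Fin n) R[X] :=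
  Matrix.of fun i j => derivative^[i] (f j)

theorem coeff_X_pow_mul_iterate_derivative (p : R[X]) (k m : ℕ) :
    (X ^ k * derivative^[k] p).coeff m = m.descFactorial k • p.coeff m := by
  rw [coeff_X_pow_mul']
  split_ifs with h
  · rw [coeff_iterate_derivative, Nat.sub_add_cancel h]
  · rw [Nat.descFactorial_eq_zero_iff_lt.mpr (not_le.mp h), zero_smul]

theorem natDegree_X_pow_mul_iterate_derivative_le (p : R[X]) (k : ℕ) :
    (X ^ k * derivative^[k] p).natDegree ≤ p.natDegree :=
  natDegree_le_iff_coeff_eq_zero.mpr fun m hm => by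
    rw [coeff_X_pow_mul_iterate_derivative, coeff_eq_zero_of_natDegree_lt hm, smul_zero]

theorem X_pow_mul_det_wronskianMatrix (f : Fin n → R[X]) :
    X ^ (∑ i : Fin n, (i : ℕ)) * (wronskianMatrix f).det =
      (Matrix.of fun i j : Fin n => X ^ (i : ℕ) * derivative^[i] (f j)).det := by
  rw [← Finset.prod_pow_eq_pow_sum, ← Matrix.det_mul_column]
  rfl

theorem wronskianMatrix_sum_smul (h : Fin n → R[X]) (c : Matrix (Fin n) (Fin n) R) :
    wronskianMatrix (fun j => ∑ k, c k j • h k) = wronskianMatrix h * c.map C := by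
  ext i j : 1
  simp only [wronskianMatrix, Matrix.of_apply, Matrix.mul_apply, Matrix.map_apply,
    iterate_derivative_sum, smul_eq_C_mul, iterate_derivative_C_mul]
  exact Finset.sum_congr rfl fun k _ => mul_comm _ _

theorem iterate_derivative_taylor (r : R) (p : R[X]) (k : ℕ) :
    derivative^[k] (taylor r p) = taylor r (derivative^[k] p) := by
  induction k generalizing p with
  | zero => rfl
  | succ k ih =>
    rw [Function.iterate_succ_apply, Function.iterate_succ_apply, ← ih]
    simp [taylor_apply, derivative_comp]

theorem det_wronskianMatrix_taylor (r : R) (f : Fin n → R[X]) :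
    (wronskianMatrix fun j => taylor r (f j)).det = taylor r (wronskianMatrix f).det := by
  change _ = taylorAlgHom r _
  rw [AlgHom.map_det]
  congr 1
  ext i j : 1
  simp [wronskianMatrix, iterate_derivative_taylor]

theorem natDegree_det_le_of_forall_le {ι : Type*} [Fintype ι] [DecidableEq ι]
    (M : Matrix ι ι R[X]) {d : ℕ} (h : ∀ i j, (M i j).natDegree ≤ d) :
    M.det.natDegree ≤ Fintype.card ι * d := by
  rw [Matrix.det_apply']
  refine natDegree_sum_le_of_forall_le _ _ fun σ _ => ?_
  refine natDegree_mul_le.trans ?_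
  rw [natDegree_intCast, zero_add]
  refine (natDegree_prod_le _ _).trans ?_
  simpa using Finset.sum_le_card_nsmul Finset.univ _ d fun i _ => h (σ i) i

theorem exists_X_pow_mul_det_wronskianMatrix_eq (f : Fin n → R[X]) :
    ∃ Q : R[X], X ^ (∑ i : Fin n, (i : ℕ)) * (wronskianMatrix f).det =
        X ^ (∑ j, (f j).natTrailingDegree) * Q ∧
      Q.coeff 0 = (∏ j, (f j).trailingCoeff) *
        (Matrix.of fun i j : Fin n => ((f j).natTrailingDegree.descFactorial i : R)).det := by
  have hdvd (i j : Fin n) : X ^ (f j).natTrailingDegree ∣ X ^ (i : ℕ) * derivative^[i] (f j) :=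
    X_pow_dvd_iff.mpr fun m hm => by
      rw [coeff_X_pow_mul_iterate_derivative, coeff_eq_zero_of_lt_natTrailingDegree hm, smul_zero]
  choose N hN using hdvd
  refine ⟨(Matrix.of N).det, ?_, ?_⟩
  · rw [X_pow_mul_det_wronskianMatrix, ← Finset.prod_pow_eq_pow_sum, ← Matrix.det_mul_row]
    exact congrArg Matrix.det (Matrix.ext hN)
  · have hN0 (i j : Fin n) :
        (N i j).coeff 0 = (f j).trailingCoeff * ((f j).natTrailingDegree.descFactorial i : R) := by
      rw [← coeff_X_pow_mul _ (f j).natTrailingDegree, zero_add, ← hN,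
        coeff_X_pow_mul_iterate_derivative, nsmul_eq_mul, mul_comm, trailingCoeff]
    rw [← Matrix.det_mul_row, ← constantCoeff_apply, RingHom.map_det]
    congr 1
    ext i j
    simp [hN0]

theorem natDegree_det_wronskianMatrix_add_le [Nontrivial R] {f : Fin n → R[X]} {d : ℕ}
    (hf : ∀ j, (f j).natDegree ≤ d) (hW : (wronskianMatrix f).det ≠ 0) :
    (wronskianMatrix f).det.natDegree + ∑ i : Fin n, (i : ℕ) ≤ n * d := by
  rw [← natDegree_X_pow_mul (n := ∑ i : Fin n, (i : ℕ)) hW, X_pow_mul_det_wronskianMatrix]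
  have h := natDegree_det_le_of_forall_le (Matrix.of fun i j : Fin n =>
    X ^ (i : ℕ) * derivative^[i] (f j)) fun i j =>
      (natDegree_X_pow_mul_iterate_derivative_le (f j) i).trans (hf j)
  rwa [Fintype.card_fin] at h

theorem det_wronskianMatrix_coe_basis {V : Submodule R R[X]} (b : Module.Basis (Fin n) R V)
    (g : Fin n → V) :
    (wronskianMatrix fun j => (g j : R[X])).det =
      (wronskianMatrix fun j => (b j : R[X])).det * C (b.det g) := by
  have hg : (fun j => (g j : R[X])) = fun j => ∑ k, b.toMatrix g k j • (b k : R[X]) := by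
    funext j
    rw [← b.sum_toMatrix_smul_self g j]
    simp only [Submodule.coe_sum, Submodule.coe_smul]
  rw [hg, wronskianMatrix_sum_smul, Matrix.det_mul, b.det_apply, RingHom.map_det]
  rfl

end CommRing

section IsDomain

variable {R : Type*} [CommRing R] [IsDomain R] {n : ℕ}

theorem finsum_rootMultiplicity_eq_card_roots (M : Type*) [AddCommMonoidWithOne M] (p : R[X]) :
    ∑ᶠ x, (p.rootMultiplicity x : M) = Multiset.card p.roots := by
  classical
  rw [finsum_eq_sum_of_support_subset (s := p.roots.toFinset), ← Nat.cast_sum]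
  · simp_rw [← count_roots, Multiset.toFinset_sum_count_eq]
  · intro x hx
    rw [Function.mem_support] at hx
    rw [Finset.mem_coe, Multiset.mem_toFinset, ← Multiset.count_ne_zero, count_roots]
    exact fun h => hx (by rw [h, Nat.cast_zero])

variable [CharZero R]

theorem det_descFactorial_ne_zero {a : Fin n → ℕ} (ha : Function.Injective a) :
    (Matrix.of fun i j : Fin n => ((a j).descFactorial i : R)).det ≠ 0 := by
  have hvdm : (Matrix.of fun i j : Fin n => ((a j).descFactorial i : R)) =
      Matrix.transpose (Matrix.of fun i j : Fin n => (descPochhammer R j).eval (a i : R)) := by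
    ext i j
    simp [descPochhammer_eval_eq_descFactorial]
  rw [hvdm, Matrix.det_transpose, ← Matrix.det_eval_matrixOfPolynomials_eq_det_vandermonde _ _
    (fun j => descPochhammer_natDegree R j) (fun j => monic_descPochhammer R j),
    Matrix.det_vandermonde_ne_zero_iff]
  exact Nat.cast_injective.comp ha

theorem natTrailingDegree_det_wronskianMatrix {f : Fin n → R[X]} (hf : ∀ j, f j ≠ 0)
    (hinj : Function.Injective fun j => (f j).natTrailingDegree) :
    (wronskianMatrix f).det ≠ 0 ∧
      (wronskianMatrix f).det.natTrailingDegree + ∑ i : Fin n, (i : ℕ) =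
        ∑ j, (f j).natTrailingDegree := by
  obtain ⟨Q, hQ, hQ0⟩ := exists_X_pow_mul_det_wronskianMatrix_eq f
  have hQ0 : Q.coeff 0 ≠ 0 := hQ0 ▸ mul_ne_zero
    (Finset.prod_ne_zero_iff.mpr fun j _ => trailingCoeff_nonzero_iff_nonzero.mpr (hf j))
    (det_descFactorial_ne_zero hinj)
  have hQ_ne : Q ≠ 0 := fun h => hQ0 (by rw [h, coeff_zero])
  have hW : (wronskianMatrix f).det ≠ 0 := by
    rintro hW
    rw [hW, mul_zero, eq_comm, mul_eq_zero] at hQ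
    exact hQ.elim (pow_ne_zero _ X_ne_zero) hQ_ne
  refine ⟨hW, ?_⟩
  have := congrArg natTrailingDegree hQ
  rwa [mul_comm, natTrailingDegree_mul_X_pow hW, mul_comm, natTrailingDegree_mul_X_pow hQ_ne,
    natTrailingDegree_eq_zero.mpr (Or.inr hQ0), zero_add] at this

theorem rootMultiplicity_det_wronskianMatrix (x : R) {f : Fin n → R[X]} (hf : ∀ j, f j ≠ 0)
    (hinj : Function.Injective fun j => (f j).rootMultiplicity x) :
    (wronskianMatrix f).det ≠ 0 ∧
      (wronskianMatrix f).det.rootMultiplicity x + ∑ i : Fin n, (i : ℕ) =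
        ∑ j, (f j).rootMultiplicity x := by
  simp only [rootMultiplicity_eq_natTrailingDegree, ← taylor_apply] at hinj ⊢
  rw [← det_wronskianMatrix_taylor, Ne, ← taylor_eq_zero (r := x), ← det_wronskianMatrix_taylor]
  exact natTrailingDegree_det_wronskianMatrix (fun j => (taylor_eq_zero x _).not.mpr (hf j)) hinj

theorem rootMultiplicity_det_wronskianMatrix_basis {V : Submodule R R[X]}
    (b : Module.Basis (Fin n) R V) (x : R) {g : Fin n → V} (hg : ∀ j, (g j : R[X]) ≠ 0)
    (hinj : Function.Injective fun j => (g j : R[X]).rootMultiplicity x) :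
    (wronskianMatrix fun j => (b j : R[X])).det ≠ 0 ∧
      (wronskianMatrix fun j => (b j : R[X])).det.rootMultiplicity x + ∑ i : Fin n, (i : ℕ) =
        ∑ j, (g j : R[X]).rootMultiplicity x := by
  obtain ⟨hW, hmult⟩ := rootMultiplicity_det_wronskianMatrix x hg hinj
  rw [det_wronskianMatrix_coe_basis b] at hW hmult
  rw [rootMultiplicity_mul hW, rootMultiplicity_C, add_zero] at hmult
  exact ⟨left_ne_zero_of_mul hW, hmult⟩

end IsDomain

end Polynomial

theorem Fin.sum_val_eq_mul_succ_div_two (r : ℕ) :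
    ∑ i : Fin (r + 1), ((i : ℕ) : ℤ) = r * (r + 1) / 2 := by
  have h := Finset.sum_range_id_mul_two (r + 1)
  rw [← Fin.sum_univ_eq_sum_range (fun i => i), Nat.add_sub_cancel] at h
  have h' : (r : ℤ) * (r + 1) = (∑ i : Fin (r + 1), ((i : ℕ) : ℤ)) * 2 := by
    rw [← Nat.cast_sum]
    exact_mod_cast (h.trans (mul_comm _ _)).symm
  rw [h', Int.mul_ediv_cancel _ two_ne_zero]

/-- Plücker formula in genus 0: for an (r+1)-dimensional space V of polynomials
of degree ≤ d, with a(x) 0 < a(x) 1 < ⋯ < a(x) r the orders of vanishing at x of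
nonzero elements of V and w(x) := ∑_j (a(x) j − j), we have w(x) ≥ 0 for all x,
w(x) = 0 for all but finitely many x, and ∑_x w(x) ≤ (r+1)d − r(r+1)/2. -/
theorem pluecker_genus_zero (r d : ℕ) (V : Submodule ℂ (Polynomial ℂ))
    [FiniteDimensional ℂ V] (hdim : Module.finrank ℂ V = r + 1)
    (hdeg : ∀ f ∈ V, f.natDegree ≤ d)
    (a : ℂ → Fin (r + 1) → ℕ)
    (hmono : ∀ x : ℂ, StrictMono (a x))
    (hrange : ∀ x : ℂ,
      Set.range (a x) = {m : ℕ | ∃ f ∈ V, f ≠ 0 ∧ f.rootMultiplicity x = m}) :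
    (∀ x : ℂ, 0 ≤ ∑ j : Fin (r + 1), ((a x j : ℤ) - (j : ℤ))) ∧
    ({x : ℂ | ∑ j : Fin (r + 1), ((a x j : ℤ) - (j : ℤ)) ≠ 0}).Finite ∧
    ∑ᶠ x : ℂ, (∑ j : Fin (r + 1), ((a x j : ℤ) - (j : ℤ))) ≤
      ((r : ℤ) + 1) * (d : ℤ) - (r : ℤ) * ((r : ℤ) + 1) / 2 := by
  let b := Module.finBasisOfFinrankEq ℂ V hdim
  set W := (wronskianMatrix fun j => (b j : ℂ[X])).det
  have hadapted (x : ℂ) (j : Fin (r + 1)) :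
      ∃ f : V, (f : ℂ[X]) ≠ 0 ∧ (f : ℂ[X]).rootMultiplicity x = a x j := by
    obtain ⟨f, hfV, hf0, hfx⟩ := (hrange x).subset ⟨j, rfl⟩
    exact ⟨⟨f, hfV⟩, hf0, hfx⟩
  choose g hg0 hgx using hadapted
  have hkey (x : ℂ) : W ≠ 0 ∧ W.rootMultiplicity x + ∑ i : Fin (r + 1), (i : ℕ) = ∑ j, a x j := by
    simpa only [hgx] using rootMultiplicity_det_wronskianMatrix_basis b x (hg0 x)
      (by simpa only [hgx] using (hmono x).injective)
  have hW : W ≠ 0 := (hkey 0).1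
  have hweight (x : ℂ) : ∑ j : Fin (r + 1), ((a x j : ℤ) - (j : ℤ)) = W.rootMultiplicity x := by
    have h := congrArg (Nat.cast : ℕ → ℤ) (hkey x).2
    push_cast at h
    rw [Finset.sum_sub_distrib]
    linarith
  simp_rw [hweight]
  refine ⟨fun x => Nat.cast_nonneg _, ?_, ?_⟩
  · refine (finite_setOfPred_isRoot hW).subset fun x hx => ?_
    exact (rootMultiplicity_pos hW).mp (Nat.pos_of_ne_zero (by exact_mod_cast hx))
  · have hdegW : W.natDegree + ∑ i : Fin (r + 1), (i : ℕ) ≤ (r + 1) * d :=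
      natDegree_det_wronskianMatrix_add_le (fun j => hdeg _ (b j).2) hW
    have hroots := card_roots' W
    zify at hdegW hroots
    rw [finsum_rootMultiplicity_eq_card_roots, ← Fin.sum_val_eq_mul_succ_div_two]
    linarith
end
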